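/- Let b_1, …, b_m be nonzero vectors in ℤ^d and r_1, …, r_m real numbers, with hyperplanes H_i and closed half-spaces F_i, G_i as below, and let S ⊆ {1, …, m} be a circuit of the arrangement. Then there exists exactly one subset S⁺ ⊆ S such that (∩_{i∈S⁺} G_i) ∩ (∩_{j∈S∖S⁺} F_j) = ∅. -/

import Mathlib

/-- The affine hyperplane `H_i = {v ∈ ℝ^d : ⟨b_i, v⟩ + r_i = 0}`. -/
def hyperplane {m d : ℕ} (b : Fin m → Fin d → ℤ) (r : Fin m → ℝ) (i : Fin m) :
    Set (Fin d → ℝ) :=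
  {v | (∑ k, (b i k : ℝ) * v k) + r i = 0}

/-- The closed half-space `F_i = {v ∈ ℝ^d : ⟨b_i, v⟩ + r_i ≥ 0}`. -/
def halfspaceF {m d : ℕ} (b : Fin m → Fin d → ℤ) (r : Fin m → ℝ) (i : Fin m) :
    Set (Fin d → ℝ) :=
  {v | 0 ≤ (∑ k, (b i k : ℝ) * v k) + r i}

/-- The closed half-space `G_i = {v ∈ ℝ^d : ⟨b_i, v⟩ + r_i ≤ 0}`. -/
def halfspaceG {m d : ℕ} (b : Fin m → Fin d → ℤ) (r : Fin m → ℝ) (i : Fin m) :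
    Set (Fin d → ℝ) :=
  {v | (∑ k, (b i k : ℝ) * v k) + r i ≤ 0}

/-! The equations `⟨b_i, v⟩ + r_i = 0` (`i ∈ S`) have no common solution, so by the Fredholm
alternative there are weights `μ_i` with `∑_{i ∈ S} μ_i (⟨b_i, v⟩ + r_i) = 1` for every `v`.
The splitting `S⁺ = {i | 0 < μ_i}` works, since on its region every term of that sum is `≤ 0`.
By minimality, each `i₀ ∈ S` has a point on all `H_i`, `i ≠ i₀`, where the identity reads
`μ_{i₀} (⟨b_{i₀}, v⟩ + r_{i₀}) = 1`; this point lies in the region of every splitting that puts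
`i₀` on the side not dictated by the sign of `μ_{i₀}`, whence uniqueness. -/

section

variable {ι E 𝕜 : Type*}

theorem LinearMap.sum_apply_single_one_mul [Field 𝕜] [Fintype ι] [DecidableEq ι]
    (φ : (ι → 𝕜) →ₗ[𝕜] 𝕜) (x : ι → 𝕜) : ∑ i, φ (Pi.single i 1) * x i = φ x := by
  simp_rw [mul_comm (φ _), ← smul_eq_mul, ← map_smul, ← map_sum, ← Pi.single_smul', smul_eq_mul,
    mul_one, Finset.univ_sum_single]

theorem exists_sum_mul_eq_one_of_not_exists_common_zero [Field 𝕜] [AddCommGroup E] [Module 𝕜 E]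
    {S : Finset ι} (ℓ : ι → E →ₗ[𝕜] 𝕜) (r : ι → 𝕜) (h : ¬∃ v, ∀ i ∈ S, ℓ i v + r i = 0) :
    ∃ μ : ι → 𝕜, ∀ v, ∑ i ∈ S, μ i * (ℓ i v + r i) = 1 := by
  classical
  let L : E →ₗ[𝕜] S → 𝕜 := LinearMap.pi fun i => ℓ i
  let c : S → 𝕜 := fun i => r i
  have hc : c ∉ LinearMap.range L := by
    rintro ⟨w, hw⟩
    refine h ⟨-w, fun i hi => ?_⟩
    rw [map_neg, show r i = ℓ i w from (congrFun hw ⟨i, hi⟩).symm, neg_add_cancel]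
  obtain ⟨φ, hφc, hφL⟩ := Submodule.exists_le_ker_of_notMem hc
  refine ⟨fun i => if hi : i ∈ S then φ (Pi.single ⟨i, hi⟩ 1) / φ c else 0, fun v => ?_⟩
  calc ∑ i ∈ S, _ = (∑ i : S, φ (Pi.single i 1) * (L v + c) i) / φ c := by
        rw [← Finset.sum_coe_sort S, Finset.sum_div]
        refine Finset.sum_congr rfl fun i _ => ?_
        simp [L, c, div_mul_eq_mul_div]
    _ = 1 := by
      rw [LinearMap.sum_apply_single_one_mul, map_add, hφL ⟨v, rfl⟩, zero_add, div_self hφc]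

def signRegion [DecidableEq ι] [Zero 𝕜] [LE 𝕜] (f : ι → E → 𝕜) (S P : Finset ι) : Set E :=
  (⋂ i ∈ P, {v | f i v ≤ 0}) ∩ ⋂ j ∈ S \ P, {v | 0 ≤ f j v}

theorem mem_signRegion_of_forall_ne_eq_zero [DecidableEq ι] [Zero 𝕜] [Preorder 𝕜] {f : ι → E → 𝕜}
    {S P : Finset ι} (hP : P ⊆ S) {i₀ : ι} {v : E} (hv : ∀ i ∈ S, i ≠ i₀ → f i v = 0)
    (hmem : i₀ ∈ P → f i₀ v ≤ 0) (hnotMem : i₀ ∉ P → 0 ≤ f i₀ v) : v ∈ signRegion f S P := by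
  refine ⟨Set.mem_iInter₂.2 fun i hi => ?_, Set.mem_iInter₂.2 fun j hj => ?_⟩
  · obtain rfl | hne := eq_or_ne i i₀
    · exact hmem hi
    · exact (hv i (hP hi) hne).le
  · obtain ⟨hjS, hjP⟩ := Finset.mem_sdiff.1 hj
    obtain rfl | hne := eq_or_ne j i₀
    · exact hnotMem hjP
    · exact (hv j hjS hne).ge

theorem mul_eq_one_of_forall_ne_eq_zero [DecidableEq ι] [Semiring 𝕜] {f : ι → E → 𝕜}
    {S : Finset ι} {μ : ι → 𝕜} (hμ : ∀ v, ∑ i ∈ S, μ i * f i v = 1) {i₀ : ι}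
    (hi₀ : i₀ ∈ S) {v : E} (hv : ∀ i ∈ S, i ≠ i₀ → f i v = 0) : μ i₀ * f i₀ v = 1 := by
  rw [← hμ v, ← Finset.add_sum_erase S _ hi₀, Finset.sum_eq_zero, add_zero]
  intro i hi
  rw [hv i (Finset.mem_of_mem_erase hi) (Finset.ne_of_mem_erase hi), mul_zero]

section Dependence

variable [DecidableEq ι] [Semiring 𝕜] [LinearOrder 𝕜] [IsStrictOrderedRing 𝕜]
  {f : ι → E → 𝕜} {S : Finset ι} {μ : ι → 𝕜}

theorem signRegion_filter_pos_eq_empty (hμ : ∀ v, ∑ i ∈ S, μ i * f i v = 1) :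
    signRegion f S (S.filter (0 < μ ·)) = ∅ := by
  refine Set.eq_empty_of_forall_notMem fun v ⟨hG, hF⟩ => ?_
  have hle : ∑ i ∈ S, μ i * f i v ≤ 0 := Finset.sum_nonpos fun i hi => by
    by_cases hμi : 0 < μ i
    · exact mul_nonpos_of_nonneg_of_nonpos hμi.le
        (Set.mem_iInter₂.1 hG i (Finset.mem_filter.2 ⟨hi, hμi⟩))
    · exact mul_nonpos_of_nonpos_of_nonneg (not_lt.1 hμi)
        (Set.mem_iInter₂.1 hF i (by simp [hi, hμi]))
  exact one_pos.not_ge (hμ v ▸ hle)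

theorem eq_filter_pos_of_signRegion_eq_empty (hμ : ∀ v, ∑ i ∈ S, μ i * f i v = 1)
    (hwit : ∀ i₀ ∈ S, ∃ v, ∀ i ∈ S, i ≠ i₀ → f i v = 0) {P : Finset ι} (hP : P ⊆ S)
    (hempty : signRegion f S P = ∅) : P = S.filter (0 < μ ·) := by
  ext i₀
  by_cases hi₀ : i₀ ∈ S
  swap
  · simp only [Finset.mem_filter, hi₀, false_and, iff_false]
    exact fun h => hi₀ (hP h)
  obtain ⟨v, hv⟩ := hwit i₀ hi₀
  have hnotMem : v ∉ signRegion f S P := hempty ▸ Set.notMem_empty v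
  have hprod : 0 < μ i₀ * f i₀ v := (mul_eq_one_of_forall_ne_eq_zero hμ hi₀ hv).symm ▸ one_pos
  rw [Finset.mem_filter, and_iff_right hi₀, pos_iff_pos_of_mul_pos hprod]
  constructor
  · intro hiP
    by_contra! hle
    exact hnotMem (mem_signRegion_of_forall_ne_eq_zero hP hv (fun _ => hle) (absurd hiP))
  · intro hpos
    by_contra hiP
    exact hnotMem (mem_signRegion_of_forall_ne_eq_zero hP hv (absurd · hiP) fun _ => hpos.le)

end Dependence

end

theorem circuit_unique_splitting_general (m d : ℕ) (b : Fin m → Fin d → ℤ)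
    (r : Fin m → ℝ) (S : Finset (Fin m))
    (hcirc : (⋂ i ∈ S, hyperplane b r i) = ∅)
    (hmin : ∀ S' : Finset (Fin m), S' ⊂ S → (⋂ i ∈ S', hyperplane b r i) ≠ ∅) :
    ∃! Sp : Finset (Fin m), Sp ⊆ S ∧
      ((⋂ i ∈ Sp, halfspaceG b r i) ∩ (⋂ j ∈ S \ Sp, halfspaceF b r j)) = ∅ := by
  let ℓ i : (Fin d → ℝ) →ₗ[ℝ] ℝ := LinearMap.proj i ∘ₗ (Matrix.of fun i k => (b i k : ℝ)).mulVecLin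
  obtain ⟨μ, hμ⟩ := exists_sum_mul_eq_one_of_not_exists_common_zero ℓ r fun ⟨v, hv⟩ =>
    (hcirc ▸ Set.mem_iInter₂.2 hv : v ∈ (∅ : Set _))
  have hwit : ∀ i₀ ∈ S, ∃ v, ∀ i ∈ S, i ≠ i₀ → ℓ i v + r i = 0 := fun i₀ hi₀ => by
    obtain ⟨v, hv⟩ := Set.nonempty_iff_ne_empty.2 (hmin _ (Finset.erase_ssubset hi₀))
    exact ⟨v, fun i hi hne => Set.mem_iInter₂.1 hv i (Finset.mem_erase.2 ⟨hne, hi⟩)⟩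
  exact ⟨S.filter (0 < μ ·), ⟨Finset.filter_subset _ _, signRegion_filter_pos_eq_empty hμ⟩,
    fun P ⟨hP, hempty⟩ => eq_filter_pos_of_signRegion_eq_empty hμ hwit hP hempty⟩

/-- Let `b_1, …, b_m` be nonzero vectors in `ℤ^d`, `r_1, …, r_m` real numbers,
with hyperplanes `H_i` and closed half-spaces `F_i`, `G_i` as above, and let
`S ⊆ {1, …, m}` be a circuit of the arrangement (i.e. `∩_{i∈S} H_i = ∅` while
`∩_{i∈S'} H_i ≠ ∅` for every proper subset `S' ⊊ S`).  Then there exists exactly one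
subset `S⁺ ⊆ S` such that `(∩_{i∈S⁺} G_i) ∩ (∩_{j∈S∖S⁺} F_j) = ∅`. -/
theorem circuit_unique_splitting (m d : ℕ) (b : Fin m → Fin d → ℤ) (hb : ∀ i, b i ≠ 0)
    (r : Fin m → ℝ) (S : Finset (Fin m))
    (hcirc : (⋂ i ∈ S, hyperplane b r i) = ∅)
    (hmin : ∀ S' : Finset (Fin m), S' ⊂ S → (⋂ i ∈ S', hyperplane b r i) ≠ ∅) :
    ∃! Sp : Finset (Fin m), Sp ⊆ S ∧
      ((⋂ i ∈ Sp, halfspaceG b r i) ∩ (⋂ j ∈ S \ Sp, halfspaceF b r j)) = ∅ :=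
  circuit_unique_splitting_general m d b r S hcirc hmin
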